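/- arXiv:0710.4472 — 2 statements merged into one kernel-verified Lean document; each statement's English description precedes it below -/
import Mathlib

section
/- In the Viana–Bray model, for every fixed N, β > 0 and α > 0, the cavity function α′ ↦ ψ_N(α′,α) is differentiable on (0,∞), and ∂ψ_N/∂α′ (α′,α) = 2 Σ_{n=1}^∞ (θ^{2n}/(2n)) (1 − ⟨q_{1⋯2n}⟩′), where θ = tanh β and ⟨·⟩′ denotes the quenched-Gibbs average E Ω′^{⊗2n}(·) for the perturbed Gibbs measure Ω′ whose Boltzmann factor is exp(−β H_N(σ,α) + β Σ_{ν=1}^{P_{2α′}} J′_ν σ_{k_ν}). -/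
noncomputable section

/-- The real value of a Boolean spin: `true ↦ 1`, `false ↦ -1`. -/
def spin (b : Bool) : ℝ := if b then 1 else -1

/-- Minus `β` times the Viana–Bray Hamiltonian with `p` interaction terms:
`-β H = β ∑_{ν<p} J_ν σ_{i_ν} σ_{j_ν}`. -/
def negBetaH (N p : ℕ) (β : ℝ) (i j : Fin p → Fin N) (J : Fin p → Bool)
    (σ : Fin N → Bool) : ℝ :=
  β * ∑ ν : Fin p, spin (J ν) * spin (σ (i ν)) * spin (σ (j ν))

/-- The partition function `Z = ∑_σ exp (-β H(σ))`. -/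
def partitionZ (N p : ℕ) (β : ℝ) (i j : Fin p → Fin N) (J : Fin p → Bool) : ℝ :=
  ∑ σ : Fin N → Bool, Real.exp (negBetaH N p β i j J σ)

/-- Quenched expectation over the interaction randomness: the number `p` of interaction
terms is Poisson of mean `lam`, and the index families `i, j : Fin p → Fin N` and sign
family `J : Fin p → Bool` are i.i.d. uniform. -/
def quenchedAvg (N : ℕ) (lam : ℝ)
    (g : (p : ℕ) → (Fin p → Fin N) → (Fin p → Fin N) → (Fin p → Bool) → ℝ) : ℝ :=
  ∑' p : ℕ, (Real.exp (-lam) * lam ^ p / (Nat.factorial p : ℝ)) *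
    ((∑ i : Fin p → Fin N, ∑ j : Fin p → Fin N, ∑ J : Fin p → Bool, g p i j J) /
      ((N : ℝ) ^ p * (N : ℝ) ^ p * 2 ^ p))

/-- Expectation over the cavity randomness: a Poisson (mean `lam`) number `q` of cavity
terms, with i.i.d. uniform indices `k : Fin q → Fin N` and signs `J' : Fin q → Bool`. -/
def cavityAvg (N : ℕ) (lam : ℝ)
    (g : (q : ℕ) → (Fin q → Fin N) → (Fin q → Bool) → ℝ) : ℝ :=
  ∑' q : ℕ, (Real.exp (-lam) * lam ^ q / (Nat.factorial q : ℝ)) *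
    ((∑ k : Fin q → Fin N, ∑ J' : Fin q → Bool, g q k J') / ((N : ℝ) ^ q * 2 ^ q))

/-- The cavity field `β ∑_{ν<q} J'_ν σ_{k_ν}`. -/
def cavityField (N q : ℕ) (β : ℝ) (k : Fin q → Fin N) (J' : Fin q → Bool)
    (σ : Fin N → Bool) : ℝ :=
  β * ∑ ν : Fin q, spin (J' ν) * spin (σ (k ν))

/-- The cavity function
`ψ_N(α', α) = E ln Ω exp (β ∑_{ν=1}^{P_{2α'}} J'_ν σ_{k_ν})`, where `Ω` is the Gibbs
expectation of the Viana–Bray model at connectivity `α` and the cavity randomness (Poisson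
of mean `2α'`) is independent of the quenched variables in `Ω`. -/
def cavityFun (N : ℕ) (β α' α : ℝ) : ℝ :=
  quenchedAvg N (α * N) fun p i j J =>
    cavityAvg N (2 * α') fun q k J' =>
      Real.log ((∑ σ : Fin N → Bool,
        Real.exp (negBetaH N p β i j J σ + cavityField N q β k J' σ)) /
          partitionZ N p β i j J)

/-- The magnetization `Ω'(σ_a)` of the perturbed Gibbs measure, whose Boltzmann factor is
`exp (-β H_N(σ,α) + β ∑_{ν<q} J'_ν σ_{k_ν})`, for a given realization of all the
randomness. -/
def pertMag (N p q : ℕ) (β : ℝ) (i j : Fin p → Fin N) (J : Fin p → Bool)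
    (k : Fin q → Fin N) (J' : Fin q → Bool) (a : Fin N) : ℝ :=
  (∑ σ : Fin N → Bool,
    Real.exp (negBetaH N p β i j J σ + cavityField N q β k J' σ) * spin (σ a)) /
    ∑ σ : Fin N → Bool, Real.exp (negBetaH N p β i j J σ + cavityField N q β k J' σ)

/-- The perturbed quenched average `⟨q_{1⋯2n}⟩' = E Ω'^{⊗2n}(q_{1⋯2n}) =
E[(1/N) ∑_a Ω'(σ_a)^{2n}]`, with cavity perturbation of Poisson mean `2α'`. -/
def pertOverlap (N : ℕ) (β α' α : ℝ) (n : ℕ) : ℝ :=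
  quenchedAvg N (α * N) fun p i j J =>
    cavityAvg N (2 * α') fun q k J' =>
      (1 / (N : ℝ)) * ∑ a : Fin N, pertMag N p q β i j J k J' a ^ (2 * n)

namespace VB

/-! ### Poisson weights -/

/-- Poisson weight. -/
def pw (lam : ℝ) (p : ℕ) : ℝ := Real.exp (-lam) * lam ^ p / (Nat.factorial p : ℝ)

lemma pw_nonneg {lam : ℝ} (h : 0 ≤ lam) (p : ℕ) : 0 ≤ pw lam p := by
  unfold pw; positivity

lemma summable_pow_fact (x : ℝ) : Summable (fun q : ℕ => x ^ q / (Nat.factorial q : ℝ)) :=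
  Real.summable_pow_div_factorial x

lemma summable_lin_fact (x : ℝ) :
    Summable (fun q : ℕ => (q : ℝ) * x ^ q / (Nat.factorial q : ℝ)) := by
  rw [← summable_nat_add_iff 1]
  have : (fun q : ℕ => ((q + 1 : ℕ) : ℝ) * x ^ (q + 1) / (Nat.factorial (q + 1) : ℝ))
      = fun q : ℕ => x * (x ^ q / (Nat.factorial q : ℝ)) := by
    funext q
    have h1 : (Nat.factorial (q + 1) : ℝ) = (q + 1 : ℝ) * (Nat.factorial q : ℝ) := by
      push_cast [Nat.factorial_succ]; ring
    have h2 : ((q : ℝ) + 1) ≠ 0 := by positivity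
    have h3 : (Nat.factorial q : ℝ) ≠ 0 := Nat.cast_ne_zero.2 (Nat.factorial_ne_zero q)
    push_cast
    rw [h1]
    field_simp
    ring
  rw [this]
  exact (summable_pow_fact x).mul_left x

lemma summable_sq_fact (x : ℝ) :
    Summable (fun q : ℕ => (q : ℝ) ^ 2 * x ^ q / (Nat.factorial q : ℝ)) := by
  rw [← summable_nat_add_iff 1]
  have : (fun q : ℕ => ((q + 1 : ℕ) : ℝ) ^ 2 * x ^ (q + 1) / (Nat.factorial (q + 1) : ℝ))
      = fun q : ℕ => x * ((q : ℝ) * x ^ q / (Nat.factorial q : ℝ))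
          + x * (x ^ q / (Nat.factorial q : ℝ)) := by
    funext q
    have h1 : (Nat.factorial (q + 1) : ℝ) = (q + 1 : ℝ) * (Nat.factorial q : ℝ) := by
      push_cast [Nat.factorial_succ]; ring
    have h2 : ((q : ℝ) + 1) ≠ 0 := by positivity
    have h3 : (Nat.factorial q : ℝ) ≠ 0 := Nat.cast_ne_zero.2 (Nat.factorial_ne_zero q)
    push_cast
    rw [h1]
    field_simp
    ring
  rw [this]
  exact ((summable_lin_fact x).mul_left x).add ((summable_pow_fact x).mul_left x)

lemma tsum_pw (lam : ℝ) : ∑' p, pw lam p = 1 := by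
  unfold pw
  rw [show (fun p : ℕ => Real.exp (-lam) * lam ^ p / (Nat.factorial p : ℝ))
      = fun p : ℕ => Real.exp (-lam) * (lam ^ p / (Nat.factorial p : ℝ)) by
    funext p; ring]
  rw [tsum_mul_left]
  have : ∑' p : ℕ, lam ^ p / (Nat.factorial p : ℝ) = Real.exp lam := by
    rw [Real.exp_eq_exp_ℝ, NormedSpace.exp_eq_tsum_div]
  rw [this, ← Real.exp_add]
  simp

lemma summable_pw (lam : ℝ) : Summable (pw lam) := by
  apply Summable.of_norm_bounded (g := fun p => Real.exp (-lam) * (|lam| ^ p / (Nat.factorial p : ℝ)))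
  · exact (summable_pow_fact |lam|).mul_left _
  · intro p
    simp only [pw, Real.norm_eq_abs]
    rw [abs_div, abs_mul, abs_pow, abs_of_pos (Real.exp_pos _), Nat.abs_cast, mul_div_assoc]

lemma pw_le {lam : ℝ} (h : 0 ≤ lam) (q : ℕ) : pw lam q ≤ lam ^ q / (Nat.factorial q : ℝ) := by
  unfold pw
  rw [mul_div_assoc]
  have h1 : Real.exp (-lam) ≤ 1 := Real.exp_le_one_iff.2 (by linarith)
  have h2 : 0 ≤ lam ^ q / (Nat.factorial q : ℝ) := by positivity
  nlinarith

/-- Generic summability: Poisson weight times affinely bounded sequence. -/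
lemma summable_pw_mul_affine {lam : ℝ} (hlam : 0 ≤ lam) {b : ℕ → ℝ} {C D : ℝ}
    (hb : ∀ q, |b q| ≤ C * q + D) : Summable (fun q => pw lam q * b q) := by
  apply Summable.of_norm_bounded
    (g := fun q : ℕ => C * ((q : ℝ) * lam ^ q / (Nat.factorial q : ℝ))
      + D * (lam ^ q / (Nat.factorial q : ℝ)))
  · exact ((summable_lin_fact lam).mul_left C).add ((summable_pow_fact lam).mul_left D)
  · intro q
    rw [Real.norm_eq_abs, abs_mul, abs_of_nonneg (pw_nonneg hlam q)]
    have h1 := pw_le hlam q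
    have h2 := hb q
    have h3 : (0:ℝ) ≤ lam ^ q / (Nat.factorial q : ℝ) := by positivity
    have h4 : 0 ≤ pw lam q := pw_nonneg hlam q
    have h5 : 0 ≤ |b q| := abs_nonneg _
    calc pw lam q * |b q| ≤ (lam ^ q / (Nat.factorial q : ℝ)) * (C * q + D) := by nlinarith
      _ = C * ((q : ℝ) * lam ^ q / (Nat.factorial q : ℝ))
          + D * (lam ^ q / (Nat.factorial q : ℝ)) := by ring

/-! ### generic bounds -/

lemma abs_sum_le_card_mul {ι : Type*} [Fintype ι] (g : ι → ℝ) (C : ℝ)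
    (h : ∀ i, |g i| ≤ C) : |∑ i, g i| ≤ (Fintype.card ι : ℝ) * C := by
  calc |∑ i, g i| ≤ ∑ i, |g i| := Finset.abs_sum_le_sum_abs _ _
    _ ≤ ∑ _i : ι, C := Finset.sum_le_sum (fun i _ => h i)
    _ = (Fintype.card ι : ℝ) * C := by
        rw [Finset.sum_const, Finset.card_univ, nsmul_eq_mul]

lemma abs_tsum_le {f g : ℕ → ℝ} (hg : Summable g) (h : ∀ q, |f q| ≤ g q) :
    |∑' q, f q| ≤ ∑' q, g q := by
  have hf : Summable (fun q => ‖f q‖) := by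
    apply Summable.of_norm_bounded (g := g) hg
    intro q; rw [Real.norm_eq_abs, Real.norm_eq_abs, abs_abs]; exact h q
  calc |∑' q, f q| = ‖∑' q, f q‖ := rfl
    _ ≤ ∑' q, ‖f q‖ := norm_tsum_le_tsum_norm hf
    _ ≤ ∑' q, g q := Summable.tsum_le_tsum (fun q => by rw [Real.norm_eq_abs]; exact h q) hf hg

lemma card_fun_fin_real (X : Type*) [Fintype X] (q : ℕ) :
    (Fintype.card (Fin q → X) : ℝ) = (Fintype.card X : ℝ) ^ q := by
  rw [Fintype.card_fun, Fintype.card_fin]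
  push_cast
  rfl

lemma denom_kJ (N q : ℕ) :
    (Fintype.card (Fin q → Fin N) : ℝ) * (Fintype.card (Fin q → Bool) : ℝ)
      = (N : ℝ) ^ q * 2 ^ q := by
  rw [card_fun_fin_real, card_fun_fin_real, Fintype.card_fin, Fintype.card_bool]
  norm_num

lemma abs_avg_kJ_le (N q : ℕ) (hN : 1 ≤ N) {C : ℝ} (hC : 0 ≤ C)
    (g : (Fin q → Fin N) → (Fin q → Bool) → ℝ) (h : ∀ k J', |g k J'| ≤ C) :
    |(∑ k, ∑ J', g k J') / ((N : ℝ) ^ q * 2 ^ q)| ≤ C := by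
  have hNpos : (0:ℝ) < (N:ℝ) := by exact_mod_cast Nat.lt_of_lt_of_le Nat.zero_lt_one hN
  have hd : (0:ℝ) < (N : ℝ) ^ q * 2 ^ q := by positivity
  rw [abs_div, abs_of_pos hd, div_le_iff₀ hd]
  have h1 : |∑ k : Fin q → Fin N, ∑ J' : Fin q → Bool, g k J'|
      ≤ (Fintype.card (Fin q → Fin N) : ℝ) * ((Fintype.card (Fin q → Bool) : ℝ) * C) :=
    abs_sum_le_card_mul _ _ (fun k => abs_sum_le_card_mul _ _ (h k))
  calc |∑ k : Fin q → Fin N, ∑ J' : Fin q → Bool, g k J'|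
      ≤ (Fintype.card (Fin q → Fin N) : ℝ) * ((Fintype.card (Fin q → Bool) : ℝ) * C) := h1
    _ = C * ((N : ℝ) ^ q * 2 ^ q) := by rw [← mul_assoc, denom_kJ]; ring

lemma avg_kJ_sub (N q : ℕ) (hN : 1 ≤ N)
    (g : (Fin q → Fin N) → (Fin q → Bool) → ℝ) :
    (∑ k, ∑ J', (1 - g k J')) / ((N : ℝ) ^ q * 2 ^ q)
      = 1 - (∑ k, ∑ J', g k J') / ((N : ℝ) ^ q * 2 ^ q) := by
  have hNpos : (0:ℝ) < (N:ℝ) := by exact_mod_cast Nat.lt_of_lt_of_le Nat.zero_lt_one hN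
  have hd : (0:ℝ) < (N : ℝ) ^ q * 2 ^ q := by positivity
  have h1 : ∑ k : Fin q → Fin N, ∑ J' : Fin q → Bool, (1 - g k J')
      = ((N : ℝ) ^ q * 2 ^ q) - ∑ k : Fin q → Fin N, ∑ J' : Fin q → Bool, g k J' := by
    rw [show ((N : ℝ) ^ q * 2 ^ q)
        = ∑ _k : Fin q → Fin N, ∑ _J' : Fin q → Bool, (1:ℝ) by
      simp [Finset.sum_const, Finset.card_univ, ← denom_kJ N q]]
    rw [← Finset.sum_sub_distrib]
    exact Finset.sum_congr rfl (fun k _ => by rw [← Finset.sum_sub_distrib])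
  rw [h1, sub_div, div_self (ne_of_gt hd)]

lemma denom_ijJ (N p : ℕ) :
    (Fintype.card (Fin p → Fin N) : ℝ) * ((Fintype.card (Fin p → Fin N) : ℝ)
      * (Fintype.card (Fin p → Bool) : ℝ)) = (N : ℝ) ^ p * (N : ℝ) ^ p * 2 ^ p := by
  rw [card_fun_fin_real, card_fun_fin_real, Fintype.card_fin, Fintype.card_bool]
  norm_num
  ring

lemma abs_avg_ijJ_le (N p : ℕ) (hN : 1 ≤ N) {C : ℝ} (hC : 0 ≤ C)
    (g : (Fin p → Fin N) → (Fin p → Fin N) → (Fin p → Bool) → ℝ)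
    (h : ∀ i j J, |g i j J| ≤ C) :
    |(∑ i, ∑ j, ∑ J, g i j J) / ((N : ℝ) ^ p * (N : ℝ) ^ p * 2 ^ p)| ≤ C := by
  have hNpos : (0:ℝ) < (N:ℝ) := by exact_mod_cast Nat.lt_of_lt_of_le Nat.zero_lt_one hN
  have hd : (0:ℝ) < (N : ℝ) ^ p * (N : ℝ) ^ p * 2 ^ p := by positivity
  rw [abs_div, abs_of_pos hd, div_le_iff₀ hd]
  have h1 : |∑ i : Fin p → Fin N, ∑ j : Fin p → Fin N, ∑ J : Fin p → Bool, g i j J|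
      ≤ (Fintype.card (Fin p → Fin N) : ℝ) * ((Fintype.card (Fin p → Fin N) : ℝ)
        * ((Fintype.card (Fin p → Bool) : ℝ) * C)) :=
    abs_sum_le_card_mul _ _ (fun i => abs_sum_le_card_mul _ _
      (fun j => abs_sum_le_card_mul _ _ (h i j)))
  calc |∑ i : Fin p → Fin N, ∑ j : Fin p → Fin N, ∑ J : Fin p → Bool, g i j J|
      ≤ (Fintype.card (Fin p → Fin N) : ℝ) * ((Fintype.card (Fin p → Fin N) : ℝ)
        * ((Fintype.card (Fin p → Bool) : ℝ) * C)) := h1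
    _ = C * ((N : ℝ) ^ p * (N : ℝ) ^ p * 2 ^ p) := by
        rw [← denom_ijJ]; ring

lemma avg_ijJ_sub (N p : ℕ) (hN : 1 ≤ N)
    (g : (Fin p → Fin N) → (Fin p → Fin N) → (Fin p → Bool) → ℝ) :
    (∑ i, ∑ j, ∑ J, (1 - g i j J)) / ((N : ℝ) ^ p * (N : ℝ) ^ p * 2 ^ p)
      = 1 - (∑ i, ∑ j, ∑ J, g i j J) / ((N : ℝ) ^ p * (N : ℝ) ^ p * 2 ^ p) := by
  have hNpos : (0:ℝ) < (N:ℝ) := by exact_mod_cast Nat.lt_of_lt_of_le Nat.zero_lt_one hN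
  have hd : (0:ℝ) < (N : ℝ) ^ p * (N : ℝ) ^ p * 2 ^ p := by positivity
  have h1 : ∑ i : Fin p → Fin N, ∑ j : Fin p → Fin N, ∑ J : Fin p → Bool, (1 - g i j J)
      = ((N : ℝ) ^ p * (N : ℝ) ^ p * 2 ^ p)
        - ∑ i : Fin p → Fin N, ∑ j : Fin p → Fin N, ∑ J : Fin p → Bool, g i j J := by
    rw [show ((N : ℝ) ^ p * (N : ℝ) ^ p * 2 ^ p)
        = ∑ _i : Fin p → Fin N, ∑ _j : Fin p → Fin N, ∑ _J : Fin p → Bool, (1:ℝ) by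
      simp [Finset.sum_const, Finset.card_univ, ← denom_ijJ N p]]
    rw [← Finset.sum_sub_distrib]
    refine Finset.sum_congr rfl (fun i _ => ?_)
    rw [← Finset.sum_sub_distrib]
    exact Finset.sum_congr rfl (fun j _ => by rw [← Finset.sum_sub_distrib])
  rw [h1, sub_div, div_self (ne_of_gt hd)]

/-! ### spins, partition functions -/

lemma abs_spin (b : Bool) : |spin b| = 1 := by cases b <;> simp [spin]

lemma spin_cases (b : Bool) : spin b = 1 ∨ spin b = -1 := by cases b <;> simp [spin]

lemma spin_mul_cases (a b : Bool) : spin a * spin b = 1 ∨ spin a * spin b = -1 := by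
  rcases spin_cases a with h | h <;> rcases spin_cases b with h' | h' <;>
    rw [h, h'] <;> norm_num

lemma partitionZ_pos (N p : ℕ) (β : ℝ) (i j : Fin p → Fin N) (J : Fin p → Bool) :
    0 < partitionZ N p β i j J :=
  Finset.sum_pos (fun σ _ => Real.exp_pos _) ⟨fun _ => true, Finset.mem_univ _⟩

lemma pZc_pos (N p q : ℕ) (β : ℝ) (i j : Fin p → Fin N) (J : Fin p → Bool)
    (k : Fin q → Fin N) (J' : Fin q → Bool) :
    0 < ∑ σ : Fin N → Bool, Real.exp (negBetaH N p β i j J σ + cavityField N q β k J' σ) :=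
  Finset.sum_pos (fun σ _ => Real.exp_pos _) ⟨fun _ => true, Finset.mem_univ _⟩

lemma abs_cavityField (N q : ℕ) {β : ℝ} (hβ : 0 ≤ β) (k : Fin q → Fin N) (J' : Fin q → Bool)
    (σ : Fin N → Bool) : |cavityField N q β k J' σ| ≤ β * q := by
  unfold cavityField
  rw [abs_mul, abs_of_nonneg hβ]
  apply mul_le_mul_of_nonneg_left _ hβ
  calc |∑ ν : Fin q, spin (J' ν) * spin (σ (k ν))|
      ≤ ∑ ν : Fin q, |spin (J' ν) * spin (σ (k ν))| := Finset.abs_sum_le_sum_abs _ _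
    _ = ∑ _ν : Fin q, (1:ℝ) := by
        apply Finset.sum_congr rfl; intro ν _; rw [abs_mul, abs_spin, abs_spin, mul_one]
    _ = q := by simp

/-- The log-ratio term. -/
def Lg (N p q : ℕ) (β : ℝ) (i j : Fin p → Fin N) (J : Fin p → Bool)
    (k : Fin q → Fin N) (J' : Fin q → Bool) : ℝ :=
  Real.log ((∑ σ : Fin N → Bool,
    Real.exp (negBetaH N p β i j J σ + cavityField N q β k J' σ)) /
      partitionZ N p β i j J)

lemma abs_Lg (N p q : ℕ) {β : ℝ} (hβ : 0 ≤ β) (i j : Fin p → Fin N) (J : Fin p → Bool)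
    (k : Fin q → Fin N) (J' : Fin q → Bool) : |Lg N p q β i j J k J'| ≤ β * q := by
  have hZ := partitionZ_pos N p β i j J
  have hZc := pZc_pos N p q β i j J k J'
  have hub : (∑ σ : Fin N → Bool,
      Real.exp (negBetaH N p β i j J σ + cavityField N q β k J' σ))
      ≤ Real.exp (β * q) * partitionZ N p β i j J := by
    rw [partitionZ, Finset.mul_sum]
    apply Finset.sum_le_sum
    intro σ _
    rw [← Real.exp_add]
    apply Real.exp_le_exp.2
    have := (abs_le.1 (abs_cavityField N q hβ k J' σ)).2
    linarith
  have hlb : Real.exp (-(β * q)) * partitionZ N p β i j J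
      ≤ ∑ σ : Fin N → Bool,
        Real.exp (negBetaH N p β i j J σ + cavityField N q β k J' σ) := by
    rw [partitionZ, Finset.mul_sum]
    apply Finset.sum_le_sum
    intro σ _
    rw [← Real.exp_add]
    apply Real.exp_le_exp.2
    have := (abs_le.1 (abs_cavityField N q hβ k J' σ)).1
    linarith
  rw [abs_le]
  unfold Lg
  rw [Real.log_div (ne_of_gt hZc) (ne_of_gt hZ)]
  constructor
  · have h1 : Real.log (Real.exp (-(β * q)) * partitionZ N p β i j J)
        ≤ Real.log (∑ σ : Fin N → Bool,
          Real.exp (negBetaH N p β i j J σ + cavityField N q β k J' σ)) :=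
      Real.log_le_log (by positivity) hlb
    rw [Real.log_mul (Real.exp_ne_zero _) (ne_of_gt hZ), Real.log_exp] at h1
    linarith
  · have h1 : Real.log (∑ σ : Fin N → Bool,
        Real.exp (negBetaH N p β i j J σ + cavityField N q β k J' σ))
        ≤ Real.log (Real.exp (β * q) * partitionZ N p β i j J) :=
      Real.log_le_log hZc hub
    rw [Real.log_mul (Real.exp_ne_zero _) (ne_of_gt hZ), Real.log_exp] at h1
    linarith

lemma abs_pertMag_le_one (N p q : ℕ) (β : ℝ) (i j : Fin p → Fin N) (J : Fin p → Bool)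
    (k : Fin q → Fin N) (J' : Fin q → Bool) (a : Fin N) :
    |pertMag N p q β i j J k J' a| ≤ 1 := by
  have hZc := pZc_pos N p q β i j J k J'
  unfold pertMag
  rw [abs_div, abs_of_pos hZc, div_le_one hZc]
  calc |∑ σ : Fin N → Bool,
        Real.exp (negBetaH N p β i j J σ + cavityField N q β k J' σ) * spin (σ a)|
      ≤ ∑ σ : Fin N → Bool,
        |Real.exp (negBetaH N p β i j J σ + cavityField N q β k J' σ) * spin (σ a)| :=
        Finset.abs_sum_le_sum_abs _ _
    _ = ∑ σ : Fin N → Bool,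
        Real.exp (negBetaH N p β i j J σ + cavityField N q β k J' σ) := by
        apply Finset.sum_congr rfl; intro σ _
        rw [abs_mul, abs_spin, mul_one, abs_of_pos (Real.exp_pos _)]

/-! ### the series coefficient -/

/-- Series coefficient `tanh β ^ (2(n+1)) / (2(n+1))`. -/
def tcoef (β : ℝ) (n : ℕ) : ℝ := Real.tanh β ^ (2 * (n + 1)) / (2 * ((n : ℝ) + 1))

lemma tcoef_nonneg (β : ℝ) (n : ℕ) : 0 ≤ tcoef β n := by
  unfold tcoef
  apply div_nonneg _ (by positivity)
  rw [pow_mul]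
  positivity

lemma abs_tanh_lt_one (β : ℝ) : |Real.tanh β| < 1 := by
  rw [Real.tanh_eq_sinh_div_cosh, abs_div, abs_of_pos (Real.cosh_pos β),
    div_lt_one (Real.cosh_pos β)]
  nlinarith [Real.cosh_sq_sub_sinh_sq β, Real.cosh_pos β, abs_nonneg (Real.sinh β),
    sq_abs (Real.sinh β)]

lemma tanh_sq_lt_one (β : ℝ) : Real.tanh β ^ 2 < 1 := by
  have := abs_tanh_lt_one β
  nlinarith [sq_abs (Real.tanh β), abs_nonneg (Real.tanh β)]

lemma summable_tcoef (β : ℝ) : Summable (tcoef β) := by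
  apply Summable.of_norm_bounded (g := fun n => (Real.tanh β ^ 2) ^ n)
  · exact summable_geometric_of_lt_one (by positivity) (tanh_sq_lt_one β)
  · intro n
    rw [Real.norm_eq_abs, abs_of_nonneg (tcoef_nonneg β n)]
    unfold tcoef
    rw [pow_mul, div_le_iff₀ (by positivity)]
    have h0 : (0:ℝ) ≤ Real.tanh β ^ 2 := sq_nonneg _
    have h1 : Real.tanh β ^ 2 ≤ 1 := le_of_lt (tanh_sq_lt_one β)
    have h2 : (Real.tanh β ^ 2) ^ (n + 1) ≤ (Real.tanh β ^ 2) ^ n :=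
      pow_le_pow_of_le_one h0 h1 (Nat.le_succ n)
    have h3 : (0:ℝ) ≤ (Real.tanh β ^ 2) ^ n := pow_nonneg h0 n
    have h4 : (1:ℝ) ≤ 2 * ((n:ℝ) + 1) := by
      have : (0:ℝ) ≤ (n:ℝ) := Nat.cast_nonneg n
      linarith
    nlinarith

lemma summable_tcoef_bnd (β : ℝ) {C : ℝ} {g : ℕ → ℝ} (hg : ∀ n, |g n| ≤ C) :
    Summable (fun n => tcoef β n * g n) := by
  apply Summable.of_norm_bounded (g := fun n => tcoef β n * C)
  · exact (summable_tcoef β).mul_right C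
  · intro n
    rw [Real.norm_eq_abs, abs_mul, abs_of_nonneg (tcoef_nonneg β n)]
    exact mul_le_mul_of_nonneg_left (hg n) (tcoef_nonneg β n)

lemma one_sub_tanh_sq (β : ℝ) : 1 - Real.tanh β ^ 2 = 1 / Real.cosh β ^ 2 := by
  have hc := Real.cosh_pos β
  rw [Real.tanh_eq_sinh_div_cosh, div_pow]
  have hc2 : Real.cosh β ^ 2 ≠ 0 := by positivity
  field_simp
  linarith [Real.cosh_sq_sub_sinh_sq β]

lemma hasSum_key (β : ℝ) {m : ℝ} (hm : |m| ≤ 1) :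
    HasSum (fun n : ℕ => tcoef β n * (1 - m ^ (2 * (n + 1))))
      (Real.log (Real.cosh β) + Real.log (1 - Real.tanh β ^ 2 * m ^ 2) / 2) := by
  set θ2 := Real.tanh β ^ 2 with hθ2
  have hθ2lt : |θ2| < 1 := by
    rw [abs_of_nonneg (sq_nonneg _)]; exact tanh_sq_lt_one β
  have hm2 : |θ2 * m ^ 2| < 1 := by
    rw [abs_mul, abs_of_nonneg (sq_nonneg _), abs_of_nonneg (sq_nonneg _)]
    calc θ2 * m ^ 2 ≤ θ2 * 1 := by
          apply mul_le_mul_of_nonneg_left _ (sq_nonneg _)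
          nlinarith [sq_abs m, abs_nonneg m]
      _ < 1 := by rw [mul_one]; exact (abs_lt.1 hθ2lt).2
  have H1 := (Real.hasSum_pow_div_log_of_abs_lt_one hθ2lt).mul_left (1/2 : ℝ)
  have H2 := (Real.hasSum_pow_div_log_of_abs_lt_one hm2).mul_left (1/2 : ℝ)
  have H := H1.sub H2
  have hfun : (fun n : ℕ =>
      1/2 * (θ2 ^ (n + 1) / (n + 1)) - 1/2 * ((θ2 * m^2) ^ (n + 1) / (n + 1)))
      = fun n : ℕ => tcoef β n * (1 - m ^ (2 * (n + 1))) := by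
    funext n
    have hne : ((n : ℝ) + 1) ≠ 0 := by positivity
    unfold tcoef
    rw [hθ2]
    rw [pow_mul, pow_mul, mul_pow]
    push_cast
    field_simp
  rw [hfun] at H
  have hlc : Real.log (Real.cosh β) = -(1/2) * Real.log (1 - θ2) := by
    rw [hθ2, one_sub_tanh_sq, Real.log_div one_ne_zero (by positivity), Real.log_one,
      Real.log_pow]
    push_cast
    ring
  rw [show Real.log (Real.cosh β) + Real.log (1 - θ2 * m ^ 2) / 2
      = 1 / 2 * -Real.log (1 - θ2) - 1 / 2 * -Real.log (1 - θ2 * m ^ 2) by rw [hlc]; ring]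
  exact H

/-! ### the cavity increment -/

lemma sum_cons {X : Type*} [Fintype X] {q : ℕ} (F : (Fin (q+1) → X) → ℝ) :
    ∑ f : Fin (q+1) → X, F f = ∑ x : X, ∑ f : Fin q → X, F (Fin.cons x f) := by
  rw [← Equiv.sum_comp (Fin.consEquiv (fun _ : Fin (q+1) => X)) F, Fintype.sum_prod_type]
  rfl

lemma cavityField_cons (N q : ℕ) (β : ℝ) (k : Fin q → Fin N) (J' : Fin q → Bool)
    (k0 : Fin N) (e : Bool) (σ : Fin N → Bool) :
    cavityField N (q+1) β (Fin.cons k0 k) (Fin.cons e J') σ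
      = β * (spin e * spin (σ k0)) + cavityField N q β k J' σ := by
  unfold cavityField
  rw [Fin.sum_univ_succ]
  simp only [Fin.cons_zero, Fin.cons_succ]
  ring

lemma exp_mul_spin (β s : ℝ) (hs : s = 1 ∨ s = -1) :
    Real.exp (β * s) = Real.cosh β + s * Real.sinh β := by
  rcases hs with h | h <;> subst h
  · rw [mul_one, one_mul]; exact (Real.cosh_add_sinh β).symm
  · rw [mul_neg_one, ← Real.cosh_sub_sinh]; ring

lemma Lg_cons (N p q : ℕ) (β : ℝ) (i j : Fin p → Fin N) (J : Fin p → Bool)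
    (k : Fin q → Fin N) (J' : Fin q → Bool) (k0 : Fin N) (e : Bool) :
    Lg N p (q+1) β i j J (Fin.cons k0 k) (Fin.cons e J')
      = Real.log (Real.cosh β *
          (1 + Real.tanh β * (spin e * pertMag N p q β i j J k J' k0)))
        + Lg N p q β i j J k J' := by
  have hZ := partitionZ_pos N p β i j J
  have hZc := pZc_pos N p q β i j J k J'
  set Zc := ∑ σ : Fin N → Bool,
    Real.exp (negBetaH N p β i j J σ + cavityField N q β k J' σ) with hZcdef
  set m := pertMag N p q β i j J k J' k0 with hmdef
  have hm : |m| ≤ 1 := abs_pertMag_le_one N p q β i j J k J' k0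
  have hC : 0 < 1 + Real.tanh β * (spin e * m) := by
    have h1 : |Real.tanh β * (spin e * m)| < 1 := by
      rw [abs_mul, abs_mul, abs_spin, one_mul]
      calc |Real.tanh β| * |m| ≤ |Real.tanh β| * 1 :=
            mul_le_mul_of_nonneg_left hm (abs_nonneg _)
        _ < 1 := by rw [mul_one]; exact abs_tanh_lt_one β
    linarith [(abs_lt.1 h1).1]
  have hnum : (∑ σ : Fin N → Bool,
      Real.exp (negBetaH N p β i j J σ
        + cavityField N (q+1) β (Fin.cons k0 k) (Fin.cons e J') σ))
      = Zc * (Real.cosh β * (1 + Real.tanh β * (spin e * m))) := by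
    have step1 : (∑ σ : Fin N → Bool,
        Real.exp (negBetaH N p β i j J σ
          + cavityField N (q+1) β (Fin.cons k0 k) (Fin.cons e J') σ))
        = ∑ σ : Fin N → Bool,
          Real.exp (negBetaH N p β i j J σ + cavityField N q β k J' σ)
            * (Real.cosh β + (spin e * spin (σ k0)) * Real.sinh β) := by
      apply Finset.sum_congr rfl
      intro σ _
      rw [cavityField_cons]
      rw [show negBetaH N p β i j J σ + (β * (spin e * spin (σ k0)) + cavityField N q β k J' σ)
          = (negBetaH N p β i j J σ + cavityField N q β k J' σ)
            + β * (spin e * spin (σ k0)) by ring]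
      rw [Real.exp_add, exp_mul_spin β _ (spin_mul_cases e (σ k0))]
    have hM : (∑ σ : Fin N → Bool,
        Real.exp (negBetaH N p β i j J σ + cavityField N q β k J' σ) * spin (σ k0))
        = m * Zc := by
      rw [hmdef, pertMag, ← hZcdef, div_mul_cancel₀]
      exact ne_of_gt hZc
    have hsinh : Real.sinh β = Real.tanh β * Real.cosh β := by
      rw [Real.tanh_eq_sinh_div_cosh]
      field_simp
    rw [step1]
    have step2 : ∑ σ : Fin N → Bool,
        Real.exp (negBetaH N p β i j J σ + cavityField N q β k J' σ)
          * (Real.cosh β + (spin e * spin (σ k0)) * Real.sinh β)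
        = Real.cosh β * Zc + Real.sinh β * spin e
            * ∑ σ : Fin N → Bool,
              Real.exp (negBetaH N p β i j J σ + cavityField N q β k J' σ) * spin (σ k0) := by
      rw [hZcdef, Finset.mul_sum, Finset.mul_sum, ← Finset.sum_add_distrib]
      apply Finset.sum_congr rfl
      intro σ _
      ring
    rw [step2, hM, hsinh]
    ring
  unfold Lg
  rw [hnum, ← hZcdef]
  rw [show Zc * (Real.cosh β * (1 + Real.tanh β * (spin e * m))) / partitionZ N p β i j J
      = (Real.cosh β * (1 + Real.tanh β * (spin e * m))) * (Zc / partitionZ N p β i j J) by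
    ring]
  rw [Real.log_mul (by positivity) (by positivity)]

lemma sum_bool_log (β : ℝ) {m : ℝ} (hm : |m| ≤ 1) :
    ∑ e : Bool, Real.log (Real.cosh β * (1 + Real.tanh β * (spin e * m)))
      = 2 * ∑' n : ℕ, tcoef β n * (1 - m ^ (2 * (n + 1))) := by
  have hθ := abs_tanh_lt_one β
  have h1 : |Real.tanh β * m| < 1 := by
    rw [abs_mul]
    calc |Real.tanh β| * |m| ≤ |Real.tanh β| * 1 :=
          mul_le_mul_of_nonneg_left hm (abs_nonneg _)
      _ < 1 := by rw [mul_one]; exact hθ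
  have hp : 0 < 1 + Real.tanh β * m := by linarith [(abs_lt.1 h1).1]
  have hq : 0 < 1 - Real.tanh β * m := by linarith [(abs_lt.1 h1).2]
  have hc := Real.cosh_pos β
  rw [(hasSum_key β hm).tsum_eq, Fintype.sum_bool]
  have ht : spin true = 1 := by simp [spin]
  have hf : spin false = -1 := by simp [spin]
  rw [ht, hf]
  rw [show Real.tanh β * (1 * m) = Real.tanh β * m by ring]
  rw [show (1 : ℝ) + Real.tanh β * (-1 * m) = 1 - Real.tanh β * m by ring]
  rw [Real.log_mul (ne_of_gt hc) (ne_of_gt hp), Real.log_mul (ne_of_gt hc) (ne_of_gt hq)]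
  have e3 : Real.log (1 + Real.tanh β * m) + Real.log (1 - Real.tanh β * m)
      = Real.log (1 - Real.tanh β ^ 2 * m ^ 2) := by
    rw [← Real.log_mul (ne_of_gt hp) (ne_of_gt hq)]
    congr 1
    ring
  linarith [e3]

/-- Multi-overlap average for a fixed realization. -/
def ovl (N p q : ℕ) (β : ℝ) (i j : Fin p → Fin N) (J : Fin p → Bool)
    (k : Fin q → Fin N) (J' : Fin q → Bool) (n : ℕ) : ℝ :=
  (1 / (N : ℝ)) * ∑ a : Fin N, pertMag N p q β i j J k J' a ^ (2 * (n + 1))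

lemma abs_ovl_le_one (N p q : ℕ) (hN : 1 ≤ N) (β : ℝ) (i j : Fin p → Fin N)
    (J : Fin p → Bool) (k : Fin q → Fin N) (J' : Fin q → Bool) (n : ℕ) :
    |ovl N p q β i j J k J' n| ≤ 1 := by
  have hNpos : (0:ℝ) < (N:ℝ) := by exact_mod_cast Nat.lt_of_lt_of_le Nat.zero_lt_one hN
  unfold ovl
  rw [abs_mul, abs_of_pos (by positivity : (0:ℝ) < 1 / (N:ℝ))]
  have h1 : |∑ a : Fin N, pertMag N p q β i j J k J' a ^ (2 * (n + 1))|
      ≤ (Fintype.card (Fin N) : ℝ) * 1 := by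
    apply abs_sum_le_card_mul
    intro a
    rw [abs_pow]
    exact pow_le_one₀ (abs_nonneg _) (abs_pertMag_le_one N p q β i j J k J' a)
  rw [Fintype.card_fin] at h1
  calc 1 / (N:ℝ) * |∑ a : Fin N, pertMag N p q β i j J k J' a ^ (2 * (n + 1))|
      ≤ 1 / (N:ℝ) * ((N:ℝ) * 1) := by
        apply mul_le_mul_of_nonneg_left h1 (by positivity)
    _ = 1 := by field_simp

lemma summable_tcoef_ovl (N p q : ℕ) (hN : 1 ≤ N) (β : ℝ) (i j : Fin p → Fin N)
    (J : Fin p → Bool) (k : Fin q → Fin N) (J' : Fin q → Bool) :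
    Summable (fun n => tcoef β n * (1 - ovl N p q β i j J k J' n)) := by
  apply summable_tcoef_bnd β (C := 2)
  intro n
  have h := abs_le.1 (abs_ovl_le_one N p q hN β i j J k J' n)
  rw [abs_le]
  constructor <;> [linarith [h.2]; linarith [h.1]]

lemma sum_cons_Lg (N p q : ℕ) (hN : 1 ≤ N) (β : ℝ)
    (i j : Fin p → Fin N) (J : Fin p → Bool) (k : Fin q → Fin N) (J' : Fin q → Bool) :
    ∑ k0 : Fin N, ∑ e : Bool, Lg N p (q+1) β i j J (Fin.cons k0 k) (Fin.cons e J')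
      = (N : ℝ) * 2 * Lg N p q β i j J k J'
        + 2 * (N : ℝ) * ∑' n : ℕ, tcoef β n * (1 - ovl N p q β i j J k J' n) := by
  have hNpos : (0:ℝ) < (N:ℝ) := by exact_mod_cast Nat.lt_of_lt_of_le Nat.zero_lt_one hN
  have hsum : ∀ k0 : Fin N,
      ∑ e : Bool, Lg N p (q+1) β i j J (Fin.cons k0 k) (Fin.cons e J')
      = 2 * Lg N p q β i j J k J'
        + 2 * ∑' n : ℕ, tcoef β n
            * (1 - pertMag N p q β i j J k J' k0 ^ (2 * (n + 1))) := by
    intro k0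
    rw [Finset.sum_congr rfl (fun e _ => Lg_cons N p q β i j J k J' k0 e),
      Finset.sum_add_distrib]
    rw [sum_bool_log β (abs_pertMag_le_one N p q β i j J k J' k0)]
    rw [Finset.sum_const, Finset.card_univ]
    simp only [Fintype.card_bool]
    push_cast
    ring
  rw [Finset.sum_congr rfl (fun k0 _ => hsum k0), Finset.sum_add_distrib]
  have hsummand : ∀ k0 : Fin N, Summable (fun n : ℕ =>
      tcoef β n * (1 - pertMag N p q β i j J k J' k0 ^ (2 * (n + 1)))) := by
    intro k0
    apply summable_tcoef_bnd β (C := 2)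
    intro n
    have hm : |pertMag N p q β i j J k J' k0 ^ (2 * (n + 1))| ≤ 1 := by
      rw [abs_pow]
      exact pow_le_one₀ (abs_nonneg _) (abs_pertMag_le_one N p q β i j J k J' k0)
    have := abs_le.1 hm
    rw [abs_le]
    constructor <;> linarith [this.1, this.2]
  have hswap : ∑ k0 : Fin N, (2:ℝ) * ∑' n : ℕ, tcoef β n
        * (1 - pertMag N p q β i j J k J' k0 ^ (2 * (n + 1)))
      = 2 * (N : ℝ) * ∑' n : ℕ, tcoef β n * (1 - ovl N p q β i j J k J' n) := by
    rw [← Finset.mul_sum]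
    rw [show ∑ k0 : Fin N, ∑' n : ℕ, tcoef β n
        * (1 - pertMag N p q β i j J k J' k0 ^ (2 * (n + 1)))
        = ∑' n : ℕ, ∑ k0 : Fin N, tcoef β n
          * (1 - pertMag N p q β i j J k J' k0 ^ (2 * (n + 1)))
      from (Summable.tsum_finsetSum (fun k0 _ => hsummand k0)).symm]
    have hinner : ∀ n : ℕ, ∑ k0 : Fin N, tcoef β n
        * (1 - pertMag N p q β i j J k J' k0 ^ (2 * (n + 1)))
        = (N : ℝ) * (tcoef β n * (1 - ovl N p q β i j J k J' n)) := by
      intro n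
      rw [← Finset.mul_sum]
      have : ∑ k0 : Fin N, (1 - pertMag N p q β i j J k J' k0 ^ (2 * (n + 1)))
          = (N : ℝ) * (1 - ovl N p q β i j J k J' n) := by
        rw [Finset.sum_sub_distrib, Finset.sum_const, Finset.card_univ, Fintype.card_fin,
          nsmul_eq_mul, mul_one]
        unfold ovl
        field_simp
      rw [this]
      ring
    rw [tsum_congr hinner, tsum_mul_left]
    ring
  rw [hswap, Finset.sum_const, Finset.card_univ, Fintype.card_fin, nsmul_eq_mul]
  ring

/-- The `q`-th term of the cavity average for fixed quenched disorder. -/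
def cavB (N p : ℕ) (β : ℝ) (i j : Fin p → Fin N) (J : Fin p → Bool) (q : ℕ) : ℝ :=
  (∑ k : Fin q → Fin N, ∑ J' : Fin q → Bool, Lg N p q β i j J k J')
    / ((N : ℝ) ^ q * 2 ^ q)

lemma abs_cavB (N p : ℕ) (hN : 1 ≤ N) {β : ℝ} (hβ : 0 ≤ β) (i j : Fin p → Fin N)
    (J : Fin p → Bool) (q : ℕ) : |cavB N p β i j J q| ≤ β * q := by
  apply abs_avg_kJ_le N q hN (by positivity)
  intro k J'
  exact abs_Lg N p q hβ i j J k J'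

lemma cavB_succ_sub (N p : ℕ) (hN : 1 ≤ N) (β : ℝ) (i j : Fin p → Fin N)
    (J : Fin p → Bool) (q : ℕ) :
    cavB N p β i j J (q+1) - cavB N p β i j J q
      = (∑ k : Fin q → Fin N, ∑ J' : Fin q → Bool,
          ∑' n : ℕ, tcoef β n * (1 - ovl N p q β i j J k J' n))
        / ((N : ℝ) ^ q * 2 ^ q) := by
  have hNpos : (0:ℝ) < (N:ℝ) := by exact_mod_cast Nat.lt_of_lt_of_le Nat.zero_lt_one hN
  have hnum : (∑ k' : Fin (q+1) → Fin N, ∑ J'' : Fin (q+1) → Bool,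
      Lg N p (q+1) β i j J k' J'')
      = (N:ℝ) * 2 * (∑ k : Fin q → Fin N, ∑ J' : Fin q → Bool, Lg N p q β i j J k J')
        + 2 * (N:ℝ) * ∑ k : Fin q → Fin N, ∑ J' : Fin q → Bool,
            ∑' n : ℕ, tcoef β n * (1 - ovl N p q β i j J k J' n) := by
    calc ∑ k' : Fin (q+1) → Fin N, ∑ J'' : Fin (q+1) → Bool, Lg N p (q+1) β i j J k' J''
        = ∑ k0 : Fin N, ∑ k : Fin q → Fin N, ∑ e : Bool, ∑ J' : Fin q → Bool,
            Lg N p (q+1) β i j J (Fin.cons k0 k) (Fin.cons e J') := by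
          rw [sum_cons (fun k' => ∑ J'' : Fin (q+1) → Bool, Lg N p (q+1) β i j J k' J'')]
          refine Finset.sum_congr rfl (fun k0 _ => ?_)
          refine Finset.sum_congr rfl (fun k _ => ?_)
          exact sum_cons (fun J'' => Lg N p (q+1) β i j J (Fin.cons k0 k) J'')
      _ = ∑ k0 : Fin N, ∑ k : Fin q → Fin N, ∑ J' : Fin q → Bool, ∑ e : Bool,
            Lg N p (q+1) β i j J (Fin.cons k0 k) (Fin.cons e J') := by
          refine Finset.sum_congr rfl (fun k0 _ => ?_)
          refine Finset.sum_congr rfl (fun k _ => ?_)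
          exact Finset.sum_comm
      _ = ∑ k : Fin q → Fin N, ∑ k0 : Fin N, ∑ J' : Fin q → Bool, ∑ e : Bool,
            Lg N p (q+1) β i j J (Fin.cons k0 k) (Fin.cons e J') :=
          Finset.sum_comm
      _ = ∑ k : Fin q → Fin N, ∑ J' : Fin q → Bool, ∑ k0 : Fin N, ∑ e : Bool,
            Lg N p (q+1) β i j J (Fin.cons k0 k) (Fin.cons e J') := by
          refine Finset.sum_congr rfl (fun k _ => ?_)
          exact Finset.sum_comm
      _ = ∑ k : Fin q → Fin N, ∑ J' : Fin q → Bool,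
            ((N : ℝ) * 2 * Lg N p q β i j J k J'
              + 2 * (N : ℝ) * ∑' n : ℕ, tcoef β n * (1 - ovl N p q β i j J k J' n)) := by
          refine Finset.sum_congr rfl (fun k _ => ?_)
          refine Finset.sum_congr rfl (fun J' _ => ?_)
          exact sum_cons_Lg N p q hN β i j J k J'
      _ = (N:ℝ) * 2 * (∑ k : Fin q → Fin N, ∑ J' : Fin q → Bool, Lg N p q β i j J k J')
          + 2 * (N:ℝ) * ∑ k : Fin q → Fin N, ∑ J' : Fin q → Bool,
              ∑' n : ℕ, tcoef β n * (1 - ovl N p q β i j J k J' n) := by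
          rw [Finset.mul_sum, Finset.mul_sum, ← Finset.sum_add_distrib]
          refine Finset.sum_congr rfl (fun k _ => ?_)
          rw [Finset.mul_sum, Finset.mul_sum, ← Finset.sum_add_distrib]
  unfold cavB
  rw [hnum]
  have h2 : ((N:ℝ)) ^ (q+1) * 2 ^ (q+1) = ((N:ℝ) ^ q * 2 ^ q) * ((N:ℝ) * 2) := by ring
  rw [h2]
  have hd : ((N:ℝ) ^ q * 2 ^ q) ≠ 0 := by positivity
  field_simp
  ring
/-! ### inner function and its derivative -/

def innerF (N p : ℕ) (β : ℝ) (i j : Fin p → Fin N) (J : Fin p → Bool) (x : ℝ) : ℝ :=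
  ∑' q, pw (2*x) q * cavB N p β i j J q

def avgOvl (N p : ℕ) (β : ℝ) (i j : Fin p → Fin N) (J : Fin p → Bool) (q n : ℕ) : ℝ :=
  (∑ k : Fin q → Fin N, ∑ J' : Fin q → Bool, ovl N p q β i j J k J' n)
    / ((N : ℝ) ^ q * 2 ^ q)

def innerG (N p : ℕ) (β : ℝ) (i j : Fin p → Fin N) (J : Fin p → Bool) (x : ℝ) (n : ℕ) : ℝ :=
  ∑' q, pw (2*x) q * avgOvl N p β i j J q n

def innerD (N p : ℕ) (β : ℝ) (i j : Fin p → Fin N) (J : Fin p → Bool) (x : ℝ) : ℝ :=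
  2 * ∑' n, tcoef β n * (1 - innerG N p β i j J x n)

lemma summable_pw_mul_bnd {lam : ℝ} (hlam : 0 ≤ lam) {C : ℝ} {b : ℕ → ℝ}
    (hb : ∀ q, |b q| ≤ C) : Summable (fun q => pw lam q * b q) :=
  summable_pw_mul_affine hlam (C := 0) (D := C) (fun q => by simpa using hb q)

lemma abs_avgOvl_le_one (N p : ℕ) (hN : 1 ≤ N) (β : ℝ) (i j : Fin p → Fin N)
    (J : Fin p → Bool) (q n : ℕ) : |avgOvl N p β i j J q n| ≤ 1 :=
  abs_avg_kJ_le N q hN (by norm_num) _ (fun k J' => abs_ovl_le_one N p q hN β i j J k J' n)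

lemma abs_innerG_le_one (N p : ℕ) (hN : 1 ≤ N) (β : ℝ) (i j : Fin p → Fin N)
    (J : Fin p → Bool) {x : ℝ} (hx : 0 < x) (n : ℕ) : |innerG N p β i j J x n| ≤ 1 := by
  have h2x : (0:ℝ) ≤ 2*x := by linarith
  have h := abs_tsum_le (f := fun q => pw (2*x) q * avgOvl N p β i j J q n)
    (g := fun q => pw (2*x) q) (summable_pw _) ?_
  · rw [tsum_pw] at h; exact h
  · intro q
    rw [abs_mul, abs_of_nonneg (pw_nonneg h2x q)]
    calc pw (2*x) q * |avgOvl N p β i j J q n| ≤ pw (2*x) q * 1 :=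
          mul_le_mul_of_nonneg_left (abs_avgOvl_le_one N p hN β i j J q n) (pw_nonneg h2x q)
      _ = pw (2*x) q := mul_one _

lemma abs_one_sub_le {y : ℝ} (hy : |y| ≤ 1) : |1 - y| ≤ 2 := by
  have := abs_le.1 hy
  rw [abs_le]; constructor <;> [linarith [this.2]; linarith [this.1]]

lemma summable_tcoef_innerG (N p : ℕ) (hN : 1 ≤ N) (β : ℝ) (i j : Fin p → Fin N)
    (J : Fin p → Bool) {x : ℝ} (hx : 0 < x) :
    Summable (fun n => tcoef β n * (1 - innerG N p β i j J x n)) :=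
  summable_tcoef_bnd β (C := 2)
    (fun n => abs_one_sub_le (abs_innerG_le_one N p hN β i j J hx n))

lemma abs_innerD_le (N p : ℕ) (hN : 1 ≤ N) (β : ℝ) (i j : Fin p → Fin N)
    (J : Fin p → Bool) {x : ℝ} (hx : 0 < x) :
    |innerD N p β i j J x| ≤ 4 * ∑' n, tcoef β n := by
  unfold innerD
  rw [abs_mul]
  have h1 : |∑' n, tcoef β n * (1 - innerG N p β i j J x n)| ≤ ∑' n, tcoef β n * 2 := by
    apply abs_tsum_le ((summable_tcoef β).mul_right 2)
    intro n
    rw [abs_mul, abs_of_nonneg (tcoef_nonneg β n)]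
    exact mul_le_mul_of_nonneg_left
      (abs_one_sub_le (abs_innerG_le_one N p hN β i j J hx n)) (tcoef_nonneg β n)
  rw [tsum_mul_right] at h1
  rw [show |(2:ℝ)| = 2 by norm_num]
  linarith

/-- Derivative of `x ↦ pw (2x) q`. -/
def pwd (q : ℕ) (x : ℝ) : ℝ :=
  -2 * pw (2*x) q
    + 2 * (q:ℝ) * (Real.exp (-(2*x)) * (2*x) ^ (q-1) / (Nat.factorial q : ℝ))

lemma hasDerivAt_pw2 (q : ℕ) (x : ℝ) :
    HasDerivAt (fun x : ℝ => pw (2*x) q) (pwd q x) x := by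
  have hlin : HasDerivAt (fun x : ℝ => 2*x) 2 x := by
    simpa using (hasDerivAt_id x).const_mul (2:ℝ)
  have hexp : HasDerivAt (fun x : ℝ => Real.exp (-(2*x))) (Real.exp (-(2*x)) * (-2)) x :=
    hlin.neg.exp
  have hpow : HasDerivAt (fun x : ℝ => (2*x)^q) ((q:ℝ) * (2*x)^(q-1) * 2) x := hlin.pow q
  have H := (hexp.fun_mul hpow).div_const (Nat.factorial q : ℝ)
  have : (fun x : ℝ => Real.exp (-(2*x)) * (2*x)^q / (Nat.factorial q : ℝ))
      = fun x : ℝ => pw (2*x) q := by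
    funext y; rfl
  rw [this] at H
  refine H.congr_deriv ?_
  unfold pwd pw
  ring

/-- Fubini for double series with a product bound. -/
lemma tsum_swap_of_bound {f : ℕ → ℕ → ℝ} {a b : ℕ → ℝ} (ha : Summable a) (hb : Summable b)
    (ha0 : ∀ q, 0 ≤ a q) (hb0 : ∀ n, 0 ≤ b n)
    (hab : ∀ q n, |f q n| ≤ a q * b n) :
    ∑' q, ∑' n, f q n = ∑' n, ∑' q, f q n := by
  have key : Summable (Function.uncurry fun n q => f q n) := by
    apply Summable.of_norm_bounded (g := fun x : ℕ × ℕ => b x.1 * a x.2)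
    · exact hb.mul_of_nonneg ha hb0 ha0
    · intro x
      rw [Real.norm_eq_abs]
      calc |Function.uncurry (fun n q => f q n) x| = |f x.2 x.1| := rfl
        _ ≤ a x.2 * b x.1 := hab x.2 x.1
        _ = b x.1 * a x.2 := mul_comm _ _
  exact Summable.tsum_comm key

lemma tsum_pw_Phi (N p : ℕ) (hN : 1 ≤ N) (β : ℝ) (i j : Fin p → Fin N) (J : Fin p → Bool)
    {x : ℝ} (hx : 0 < x) :
    (∑' q : ℕ, pw (2*x) q * ((∑ k : Fin q → Fin N, ∑ J' : Fin q → Bool,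
        ∑' n : ℕ, tcoef β n * (1 - ovl N p q β i j J k J' n)) / ((N:ℝ)^q * 2^q)))
      = ∑' n : ℕ, tcoef β n * (1 - innerG N p β i j J x n) := by
  have h2x : (0:ℝ) ≤ 2*x := by linarith
  have hb2 : ∀ q n, |tcoef β n * (1 - avgOvl N p β i j J q n)| ≤ tcoef β n * 2 := by
    intro q n
    rw [abs_mul, abs_of_nonneg (tcoef_nonneg β n)]
    exact mul_le_mul_of_nonneg_left
      (abs_one_sub_le (abs_avgOvl_le_one N p hN β i j J q n)) (tcoef_nonneg β n)
  have step1 : ∀ q : ℕ, pw (2*x) q * ((∑ k : Fin q → Fin N, ∑ J' : Fin q → Bool,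
      ∑' n : ℕ, tcoef β n * (1 - ovl N p q β i j J k J' n)) / ((N:ℝ)^q * 2^q))
      = ∑' n : ℕ, pw (2*x) q * (tcoef β n * (1 - avgOvl N p β i j J q n)) := by
    intro q
    have hswap : (∑ k : Fin q → Fin N, ∑ J' : Fin q → Bool,
        ∑' n : ℕ, tcoef β n * (1 - ovl N p q β i j J k J' n))
        = ∑' n : ℕ, ∑ k : Fin q → Fin N, ∑ J' : Fin q → Bool,
            tcoef β n * (1 - ovl N p q β i j J k J' n) := by
      rw [Summable.tsum_finsetSum (fun k _ => summable_sum
        (fun J' _ => summable_tcoef_ovl N p q hN β i j J k J'))]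
      refine Finset.sum_congr rfl (fun k _ => ?_)
      rw [Summable.tsum_finsetSum (fun J' _ => summable_tcoef_ovl N p q hN β i j J k J')]
    rw [hswap]
    have hdiv : (∑' n : ℕ, ∑ k : Fin q → Fin N, ∑ J' : Fin q → Bool,
        tcoef β n * (1 - ovl N p q β i j J k J' n)) / ((N:ℝ)^q * 2^q)
        = ∑' n : ℕ, (∑ k : Fin q → Fin N, ∑ J' : Fin q → Bool,
            tcoef β n * (1 - ovl N p q β i j J k J' n)) / ((N:ℝ)^q * 2^q) := by
      exact tsum_div_const.symm
    rw [show ∀ (A : ℝ) (B : ℝ), A * (B / ((N:ℝ)^q * 2^q)) = A * B / ((N:ℝ)^q * 2^q) from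
      fun A B => by ring] at *
    rw [mul_div_assoc, hdiv, tsum_mul_left]
    refine congrArg _ (tsum_congr (fun n => ?_))
    have hpull : ∑ k : Fin q → Fin N, ∑ J' : Fin q → Bool,
        tcoef β n * (1 - ovl N p q β i j J k J' n)
        = tcoef β n * ∑ k : Fin q → Fin N, ∑ J' : Fin q → Bool,
            (1 - ovl N p q β i j J k J' n) := by
      rw [Finset.mul_sum]
      exact Finset.sum_congr rfl (fun k _ => by rw [Finset.mul_sum])
    rw [hpull, mul_div_assoc]
    congr 1
    rw [avg_kJ_sub N q hN]
    rfl
  rw [tsum_congr step1]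
  rw [tsum_swap_of_bound (a := fun q => pw (2*x) q) (b := fun n => tcoef β n * 2)
    (summable_pw _) ((summable_tcoef β).mul_right 2) (pw_nonneg h2x)
    (fun n => mul_nonneg (tcoef_nonneg β n) (by norm_num))
    (fun q n => by
      rw [abs_mul, abs_of_nonneg (pw_nonneg h2x q)]
      exact mul_le_mul_of_nonneg_left (hb2 q n) (pw_nonneg h2x q))]
  refine tsum_congr (fun n => ?_)
  rw [tsum_congr (fun q => show pw (2*x) q * (tcoef β n * (1 - avgOvl N p β i j J q n))
      = tcoef β n * (pw (2*x) q * (1 - avgOvl N p β i j J q n)) from by ring),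
    tsum_mul_left]
  congr 1
  have hs1 : Summable (fun q => pw (2*x) q) := summable_pw _
  have hs2 : Summable (fun q => pw (2*x) q * avgOvl N p β i j J q n) :=
    summable_pw_mul_bnd h2x (fun q => abs_avgOvl_le_one N p hN β i j J q n)
  calc ∑' q, pw (2*x) q * (1 - avgOvl N p β i j J q n)
      = ∑' q, (pw (2*x) q - pw (2*x) q * avgOvl N p β i j J q n) :=
        tsum_congr (fun q => by ring)
    _ = (∑' q, pw (2*x) q) - ∑' q, pw (2*x) q * avgOvl N p β i j J q n := Summable.tsum_sub hs1 hs2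
    _ = 1 - innerG N p β i j J x n := by rw [tsum_pw]; rfl

lemma hasDerivAt_innerF (N p : ℕ) (hN : 1 ≤ N) {β : ℝ} (hβ : 0 < β)
    (i j : Fin p → Fin N) (J : Fin p → Bool) {x : ℝ} (hx : 0 < x) :
    HasDerivAt (innerF N p β i j J) (innerD N p β i j J x) x := by
  set R := x + 1 with hRdef
  have hxR : x < R := by simp [hRdef]
  have hR1 : (1:ℝ) ≤ 2*R := by simp [hRdef]; linarith
  set u : ℕ → ℝ := fun q => 2*β*((q:ℝ) + (q:ℝ)^2) * ((2*R)^q / (Nat.factorial q : ℝ))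
    with hudef
  have hu : Summable u := by
    have : u = fun q : ℕ => (2*β) * ((q:ℝ) * (2*R)^q / (Nat.factorial q : ℝ))
        + (2*β) * ((q:ℝ)^2 * (2*R)^q / (Nat.factorial q : ℝ)) := by
      funext q; simp only [hudef]; ring
    rw [this]
    exact ((summable_lin_fact (2*R)).mul_left (2*β)).add
      ((summable_sq_fact (2*R)).mul_left (2*β))
  have hbound : ∀ (q : ℕ) (y : ℝ), y ∈ Set.Ioo (0:ℝ) R →
      ‖pwd q y * cavB N p β i j J q‖ ≤ u q := by
    intro q y hy
    have hy0 : 0 < y := hy.1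
    have hyR : y < R := hy.2
    have h2y : (0:ℝ) ≤ 2*y := by linarith
    have hR0 : (0:ℝ) < 2*R := by linarith
    set X := (2*R)^q / (Nat.factorial q : ℝ) with hXdef
    have hfac : (0:ℝ) < (Nat.factorial q : ℝ) := Nat.cast_pos.2 (Nat.factorial_pos q)
    have hX0 : 0 ≤ X := by positivity
    have h1 : |pw (2*y) q| ≤ X := by
      rw [abs_of_nonneg (pw_nonneg h2y q)]
      calc pw (2*y) q ≤ (2*y)^q / (Nat.factorial q : ℝ) := pw_le h2y q
        _ ≤ X := by rw [hXdef]; gcongr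
    have h2 : |Real.exp (-(2*y)) * (2*y)^(q-1) / (Nat.factorial q : ℝ)| ≤ X := by
      have hterm : (0:ℝ) ≤ Real.exp (-(2*y)) * (2*y)^(q-1) / (Nat.factorial q : ℝ) := by
        positivity
      rw [abs_of_nonneg hterm, hXdef]
      have he : Real.exp (-(2*y)) ≤ 1 := Real.exp_le_one_iff.2 (by linarith)
      calc Real.exp (-(2*y)) * (2*y)^(q-1) / (Nat.factorial q : ℝ)
          ≤ 1 * (2*y)^(q-1) / (Nat.factorial q : ℝ) := by gcongr
        _ = (2*y)^(q-1) / (Nat.factorial q : ℝ) := by rw [one_mul]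
        _ ≤ (2*R)^(q-1) / (Nat.factorial q : ℝ) := by gcongr
        _ ≤ (2*R)^q / (Nat.factorial q : ℝ) := by
            gcongr
            · exact Nat.sub_le q 1
    have habs : |pwd q y| ≤ 2*X + 2*(q:ℝ)*X := by
      unfold pwd
      calc |(-2) * pw (2*y) q
            + 2 * (q:ℝ) * (Real.exp (-(2*y)) * (2*y)^(q-1) / (Nat.factorial q : ℝ))|
          ≤ |(-2) * pw (2*y) q|
            + |2 * (q:ℝ) * (Real.exp (-(2*y)) * (2*y)^(q-1) / (Nat.factorial q : ℝ))| :=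
            abs_add_le _ _
        _ = 2 * |pw (2*y) q|
            + 2 * (q:ℝ)
              * |Real.exp (-(2*y)) * (2*y)^(q-1) / (Nat.factorial q : ℝ)| := by
            rw [abs_mul, abs_mul]
            have : |(-2 : ℝ)| = 2 := by norm_num
            rw [this]
            have : |2 * (q:ℝ)| = 2 * (q:ℝ) := abs_of_nonneg (by positivity)
            rw [this]
        _ ≤ 2*X + 2*(q:ℝ)*X := by
            have hq0 : (0:ℝ) ≤ 2*(q:ℝ) := by positivity
            nlinarith
    have hB := abs_cavB N p hN hβ.le i j J q
    rw [Real.norm_eq_abs, abs_mul]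
    calc |pwd q y| * |cavB N p β i j J q| ≤ (2*X + 2*(q:ℝ)*X) * (β * q) := by
          apply mul_le_mul habs hB (abs_nonneg _)
          positivity
      _ = u q := by simp only [hudef, hXdef]; ring
  have hg0 : Summable (fun q => pw (2*x) q * cavB N p β i j J q) :=
    summable_pw_mul_affine (by linarith) (C := β) (D := 0)
      (fun q => by simpa using abs_cavB N p hN hβ.le i j J q)
  have hxmem : x ∈ Set.Ioo (0:ℝ) R := ⟨hx, hxR⟩
  have HD : HasDerivAt (fun y => ∑' q, pw (2*y) q * cavB N p β i j J q)
      (∑' q, pwd q x * cavB N p β i j J q) x := by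
    exact hasDerivAt_tsum_of_isPreconnected hu isOpen_Ioo isPreconnected_Ioo
      (fun q y _ => (hasDerivAt_pw2 q y).mul_const _)
      hbound hxmem hg0 hxmem
  have hval : (∑' q, pwd q x * cavB N p β i j J q) = innerD N p β i j J x := by
    have h2x : (0:ℝ) ≤ 2*x := by linarith
    set F : ℕ → ℝ := fun q => 2 * (q:ℝ)
      * (Real.exp (-(2*x)) * (2*x)^(q-1) / (Nat.factorial q : ℝ)) * cavB N p β i j J q
      with hFdef
    have hFdecomp : ∀ q, F q = pwd q x * cavB N p β i j J q
        + 2 * (pw (2*x) q * cavB N p β i j J q) := by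
      intro q; simp only [hFdef, pwd]; ring
    have hsumd : Summable (fun q => pwd q x * cavB N p β i j J q) :=
      Summable.of_norm_bounded (g := u) hu (fun q => hbound q x hxmem)
    have hF : Summable F :=
      (hsumd.add (hg0.mul_left 2)).congr (fun q => (hFdecomp q).symm)
    have hFsucc : ∀ q : ℕ, F (q+1) = 2 * (pw (2*x) q * cavB N p β i j J (q+1)) := by
      intro q
      simp only [hFdef, pw, Nat.add_sub_cancel]
      have hfacne : (Nat.factorial q : ℝ) ≠ 0 := Nat.cast_ne_zero.2 (Nat.factorial_ne_zero q)
      have hfs : (Nat.factorial (q+1) : ℝ) = ((q:ℝ) + 1) * (Nat.factorial q : ℝ) := by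
        push_cast [Nat.factorial_succ]; ring
      rw [hfs]
      have hne : ((q:ℝ) + 1) ≠ 0 := by positivity
      push_cast
      field_simp
    have hF0 : F 0 = 0 := by simp [hFdef]
    have hsucc : Summable (fun q => pw (2*x) q * cavB N p β i j J (q+1)) := by
      apply summable_pw_mul_affine h2x (C := β) (D := β)
      intro q
      have := abs_cavB N p hN hβ.le i j J (q+1)
      push_cast at this ⊢
      linarith
    have htsumF : ∑' q, F q = 2 * ∑' q, pw (2*x) q * cavB N p β i j J (q+1) := by
      rw [Summable.tsum_eq_zero_add hF, hF0, zero_add, tsum_congr hFsucc, tsum_mul_left]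
    have hdecomp2 : ∀ q, pwd q x * cavB N p β i j J q
        = F q - 2 * (pw (2*x) q * cavB N p β i j J q) := by
      intro q; rw [hFdecomp q]; ring
    calc (∑' q, pwd q x * cavB N p β i j J q)
        = ∑' q, (F q - 2 * (pw (2*x) q * cavB N p β i j J q)) := tsum_congr hdecomp2
      _ = (∑' q, F q) - ∑' q, 2 * (pw (2*x) q * cavB N p β i j J q) :=
          Summable.tsum_sub hF (hg0.mul_left 2)
      _ = 2 * (∑' q, pw (2*x) q * cavB N p β i j J (q+1))
          - 2 * ∑' q, pw (2*x) q * cavB N p β i j J q := by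
          rw [htsumF, tsum_mul_left]
      _ = 2 * ∑' q, pw (2*x) q * (cavB N p β i j J (q+1) - cavB N p β i j J q) := by
          rw [tsum_congr (fun q : ℕ => show pw (2*x) q
              * (cavB N p β i j J (q+1) - cavB N p β i j J q)
              = pw (2*x) q * cavB N p β i j J (q+1) - pw (2*x) q * cavB N p β i j J q
            from by ring), Summable.tsum_sub hsucc hg0]
          ring
      _ = innerD N p β i j J x := by
          rw [tsum_congr (fun q : ℕ => by
            rw [cavB_succ_sub N p hN β i j J q])]
          rw [tsum_pw_Phi N p hN β i j J hx]
          rfl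
  rw [← hval]
  exact HD
end VB
/-- In the Viana–Bray model, for fixed `N`, `β > 0`, `α > 0`, the cavity
function `α' ↦ ψ_N(α', α)` is differentiable on `(0,∞)` with
`∂ψ_N/∂α'(α',α) = 2 ∑_{n=1}^∞ (θ^{2n}/(2n)) (1 - ⟨q_{1⋯2n}⟩')`, `θ = tanh β`, where
`⟨·⟩'` is the quenched-Gibbs average for the perturbed Gibbs measure with Boltzmann factor
`exp (-β H_N(σ,α) + β ∑_{ν=1}^{P_{2α'}} J'_ν σ_{k_ν})`. -/
theorem cavityFun_hasDerivAt (N : ℕ) (hN : 1 ≤ N) (β α : ℝ) (hβ : 0 < β) (hα : 0 < α) :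
    ∀ α' : ℝ, 0 < α' →
      HasDerivAt (fun x : ℝ => cavityFun N β x α)
        (2 * ∑' n : ℕ, Real.tanh β ^ (2 * (n + 1)) / (2 * (n + 1)) *
          (1 - pertOverlap N β α' α (n + 1))) α' := by
  intro α' hα'
  have hαN : (0:ℝ) ≤ α * N := by positivity
  have hNpos : (0:ℝ) < (N:ℝ) := by exact_mod_cast Nat.lt_of_lt_of_le Nat.zero_lt_one hN
  set K : ℝ := 4 * ∑' n, VB.tcoef β n with hKdef
  have hK0 : 0 ≤ K := by
    have : 0 ≤ ∑' n, VB.tcoef β n := tsum_nonneg (fun n => VB.tcoef_nonneg β n)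
    rw [hKdef]; linarith
  -- the u bound for the outer series
  set u : ℕ → ℝ := fun p => VB.pw (α * N) p * K with hudef
  have hu : Summable u := (VB.summable_pw _).mul_right K
  -- derivative of each quenched term
  have hg : ∀ (p : ℕ) (y : ℝ), y ∈ Set.Ioi (0:ℝ) →
      HasDerivAt (fun y : ℝ => VB.pw (α * N) p *
        ((∑ i : Fin p → Fin N, ∑ j : Fin p → Fin N, ∑ J : Fin p → Bool,
          VB.innerF N p β i j J y) / ((N:ℝ)^p * (N:ℝ)^p * 2^p)))
        (VB.pw (α * N) p *
          ((∑ i : Fin p → Fin N, ∑ j : Fin p → Fin N, ∑ J : Fin p → Bool,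
            VB.innerD N p β i j J y) / ((N:ℝ)^p * (N:ℝ)^p * 2^p))) y := by
    intro p y hy
    have h1 : HasDerivAt (fun y : ℝ => ∑ i : Fin p → Fin N, ∑ j : Fin p → Fin N,
        ∑ J : Fin p → Bool, VB.innerF N p β i j J y)
        (∑ i : Fin p → Fin N, ∑ j : Fin p → Fin N, ∑ J : Fin p → Bool,
          VB.innerD N p β i j J y) y := by
      apply HasDerivAt.fun_sum
      intro i _
      apply HasDerivAt.fun_sum
      intro j _
      apply HasDerivAt.fun_sum
      intro J _
      exact VB.hasDerivAt_innerF N p hN hβ i j J hy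
    exact (h1.div_const _).const_mul _
  -- uniform bound on the derivatives
  have hg' : ∀ (p : ℕ) (y : ℝ), y ∈ Set.Ioi (0:ℝ) →
      ‖VB.pw (α * N) p *
        ((∑ i : Fin p → Fin N, ∑ j : Fin p → Fin N, ∑ J : Fin p → Bool,
          VB.innerD N p β i j J y) / ((N:ℝ)^p * (N:ℝ)^p * 2^p))‖ ≤ u p := by
    intro p y hy
    rw [Real.norm_eq_abs, abs_mul, abs_of_nonneg (VB.pw_nonneg hαN p), hudef]
    apply mul_le_mul_of_nonneg_left _ (VB.pw_nonneg hαN p)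
    rw [hKdef]
    exact VB.abs_avg_ijJ_le N p hN (by rw [← hKdef]; exact hK0) _
      (fun i j J => VB.abs_innerD_le N p hN β i j J hy)
  -- summability at the point α'
  have hg0 : Summable (fun p : ℕ => VB.pw (α * N) p *
      ((∑ i : Fin p → Fin N, ∑ j : Fin p → Fin N, ∑ J : Fin p → Bool,
        VB.innerF N p β i j J α') / ((N:ℝ)^p * (N:ℝ)^p * 2^p))) := by
    have h2α' : (0:ℝ) ≤ 2*α' := by linarith
    set C0 : ℝ := ∑' q, VB.pw (2*α') q * (β*q) with hC0def
    have hsC0 : Summable (fun q : ℕ => VB.pw (2*α') q * (β*q)) := by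
      apply VB.summable_pw_mul_affine h2α' (C := β) (D := 0)
      intro q
      rw [abs_of_nonneg (by positivity : (0:ℝ) ≤ β * q)]
      linarith
    have hC00 : 0 ≤ C0 := tsum_nonneg (fun q =>
      mul_nonneg (VB.pw_nonneg h2α' q) (by positivity))
    have hFb : ∀ (p : ℕ) (i j : Fin p → Fin N) (J : Fin p → Bool),
        |VB.innerF N p β i j J α'| ≤ C0 := by
      intro p i j J
      apply VB.abs_tsum_le hsC0
      intro q
      rw [abs_mul, abs_of_nonneg (VB.pw_nonneg h2α' q)]
      apply mul_le_mul_of_nonneg_left _ (VB.pw_nonneg h2α' q)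
      calc |VB.cavB N p β i j J q| ≤ β * q := VB.abs_cavB N p hN hβ.le i j J q
        _ ≤ β * q := le_refl _
    apply VB.summable_pw_mul_bnd hαN (C := C0)
    intro p
    exact VB.abs_avg_ijJ_le N p hN hC00 _ (fun i j J => hFb p i j J)
  have hmem : α' ∈ Set.Ioi (0:ℝ) := hα'
  have HD : HasDerivAt (fun y : ℝ => ∑' p, VB.pw (α * N) p *
      ((∑ i : Fin p → Fin N, ∑ j : Fin p → Fin N, ∑ J : Fin p → Bool,
        VB.innerF N p β i j J y) / ((N:ℝ)^p * (N:ℝ)^p * 2^p)))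
      (∑' p, VB.pw (α * N) p *
        ((∑ i : Fin p → Fin N, ∑ j : Fin p → Fin N, ∑ J : Fin p → Bool,
          VB.innerD N p β i j J α') / ((N:ℝ)^p * (N:ℝ)^p * 2^p))) α' :=
    hasDerivAt_tsum_of_isPreconnected hu isOpen_Ioi isPreconnected_Ioi
      hg hg' hmem hg0 hmem
  -- now identify the value of the derivative
  have hval : (∑' p, VB.pw (α * N) p *
      ((∑ i : Fin p → Fin N, ∑ j : Fin p → Fin N, ∑ J : Fin p → Bool,
        VB.innerD N p β i j J α') / ((N:ℝ)^p * (N:ℝ)^p * 2^p)))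
      = 2 * ∑' n : ℕ, VB.tcoef β n * (1 - pertOverlap N β α' α (n + 1)) := by
    -- step 1 : rewrite each p-term as a series over n
    have hstep1 : ∀ p : ℕ, VB.pw (α * N) p *
        ((∑ i : Fin p → Fin N, ∑ j : Fin p → Fin N, ∑ J : Fin p → Bool,
          VB.innerD N p β i j J α') / ((N:ℝ)^p * (N:ℝ)^p * 2^p))
        = ∑' n : ℕ, VB.pw (α * N) p * (2 * (VB.tcoef β n *
            ((∑ i : Fin p → Fin N, ∑ j : Fin p → Fin N, ∑ J : Fin p → Bool,
              (1 - VB.innerG N p β i j J α' n)) / ((N:ℝ)^p * (N:ℝ)^p * 2^p)))) := by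
      intro p
      have hsummand : ∀ (i j : Fin p → Fin N) (J : Fin p → Bool),
          Summable (fun n => VB.tcoef β n * (1 - VB.innerG N p β i j J α' n)) :=
        fun i j J => VB.summable_tcoef_innerG N p hN β i j J hα'
      have h1 : (∑ i : Fin p → Fin N, ∑ j : Fin p → Fin N, ∑ J : Fin p → Bool,
          VB.innerD N p β i j J α')
          = 2 * ∑' n : ℕ, VB.tcoef β n *
              ∑ i : Fin p → Fin N, ∑ j : Fin p → Fin N, ∑ J : Fin p → Bool,
                (1 - VB.innerG N p β i j J α' n) := by
        unfold VB.innerD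
        simp_rw [← Finset.mul_sum]
        congr 1
        calc ∑ i : Fin p → Fin N, ∑ j : Fin p → Fin N, ∑ J : Fin p → Bool,
              ∑' n : ℕ, VB.tcoef β n * (1 - VB.innerG N p β i j J α' n)
            = ∑' n : ℕ, ∑ i : Fin p → Fin N, ∑ j : Fin p → Fin N, ∑ J : Fin p → Bool,
                VB.tcoef β n * (1 - VB.innerG N p β i j J α' n) := by
              rw [Summable.tsum_finsetSum (fun i _ => summable_sum (fun j _ => summable_sum
                (fun J _ => hsummand i j J)))]
              refine Finset.sum_congr rfl (fun i _ => ?_)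
              rw [Summable.tsum_finsetSum (fun j _ => summable_sum (fun J _ => hsummand i j J))]
              refine Finset.sum_congr rfl (fun j _ => ?_)
              rw [Summable.tsum_finsetSum (fun J _ => hsummand i j J)]
          _ = ∑' n : ℕ, VB.tcoef β n * ∑ i : Fin p → Fin N, ∑ j : Fin p → Fin N,
                ∑ J : Fin p → Bool, (1 - VB.innerG N p β i j J α' n) :=
              tsum_congr (fun n => by simp_rw [← Finset.mul_sum])
      rw [h1, mul_div_assoc, ← tsum_div_const, ← tsum_mul_left, ← tsum_mul_left]
      exact tsum_congr (fun n => by rw [mul_div_assoc])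
    rw [tsum_congr hstep1]
    -- step 2 : Fubini
    have hIJbnd : ∀ (p n : ℕ), |(∑ i : Fin p → Fin N, ∑ j : Fin p → Fin N,
        ∑ J : Fin p → Bool, (1 - VB.innerG N p β i j J α' n))
          / ((N:ℝ)^p * (N:ℝ)^p * 2^p)| ≤ 2 := fun p n =>
      VB.abs_avg_ijJ_le N p hN (by norm_num) _
        (fun i j J => VB.abs_one_sub_le (VB.abs_innerG_le_one N p hN β i j J hα' n))
    rw [VB.tsum_swap_of_bound (a := fun p => VB.pw (α * N) p)
      (b := fun n => 4 * VB.tcoef β n)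
      (VB.summable_pw _) ((VB.summable_tcoef β).mul_left 4)
      (VB.pw_nonneg hαN)
      (fun n => mul_nonneg (by norm_num) (VB.tcoef_nonneg β n))
      (fun p n => by
        rw [abs_mul, abs_of_nonneg (VB.pw_nonneg hαN p)]
        apply mul_le_mul_of_nonneg_left _ (VB.pw_nonneg hαN p)
        rw [abs_mul, abs_mul]
        rw [show |(2:ℝ)| = 2 by norm_num, abs_of_nonneg (VB.tcoef_nonneg β n)]
        calc 2 * (VB.tcoef β n * |(∑ i : Fin p → Fin N, ∑ j : Fin p → Fin N,
              ∑ J : Fin p → Bool, (1 - VB.innerG N p β i j J α' n))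
                / ((N:ℝ)^p * (N:ℝ)^p * 2^p)|)
            ≤ 2 * (VB.tcoef β n * 2) := by
              have := hIJbnd p n
              have h0 := VB.tcoef_nonneg β n
              nlinarith
          _ = 4 * VB.tcoef β n := by ring)]
    -- step 3 : evaluate the inner sum over p for each n
    have hstep3 : ∀ n : ℕ, (∑' p : ℕ, VB.pw (α * N) p * (2 * (VB.tcoef β n *
        ((∑ i : Fin p → Fin N, ∑ j : Fin p → Fin N, ∑ J : Fin p → Bool,
          (1 - VB.innerG N p β i j J α' n)) / ((N:ℝ)^p * (N:ℝ)^p * 2^p)))))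
        = 2 * (VB.tcoef β n * (1 - pertOverlap N β α' α (n + 1))) := by
      intro n
      have havg : ∀ p : ℕ, (∑ i : Fin p → Fin N, ∑ j : Fin p → Fin N, ∑ J : Fin p → Bool,
          (1 - VB.innerG N p β i j J α' n)) / ((N:ℝ)^p * (N:ℝ)^p * 2^p)
          = 1 - (∑ i : Fin p → Fin N, ∑ j : Fin p → Fin N, ∑ J : Fin p → Bool,
              VB.innerG N p β i j J α' n) / ((N:ℝ)^p * (N:ℝ)^p * 2^p) :=
        fun p => VB.avg_ijJ_sub N p hN _
      have hYsum : Summable (fun p : ℕ => VB.pw (α * N) p *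
          ((∑ i : Fin p → Fin N, ∑ j : Fin p → Fin N, ∑ J : Fin p → Bool,
            VB.innerG N p β i j J α' n) / ((N:ℝ)^p * (N:ℝ)^p * 2^p))) :=
        VB.summable_pw_mul_bnd hαN (C := 1) (fun p =>
          VB.abs_avg_ijJ_le N p hN (by norm_num) _
            (fun i j J => VB.abs_innerG_le_one N p hN β i j J hα' n))
      calc (∑' p : ℕ, VB.pw (α * N) p * (2 * (VB.tcoef β n *
            ((∑ i : Fin p → Fin N, ∑ j : Fin p → Fin N, ∑ J : Fin p → Bool,
              (1 - VB.innerG N p β i j J α' n)) / ((N:ℝ)^p * (N:ℝ)^p * 2^p)))))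
          = ∑' p : ℕ, (2 * VB.tcoef β n) * (VB.pw (α * N) p -
              VB.pw (α * N) p * ((∑ i : Fin p → Fin N, ∑ j : Fin p → Fin N,
                ∑ J : Fin p → Bool, VB.innerG N p β i j J α' n)
                  / ((N:ℝ)^p * (N:ℝ)^p * 2^p))) := by
            refine tsum_congr (fun p => ?_)
            rw [havg p]
            ring
        _ = (2 * VB.tcoef β n) * ∑' p : ℕ, (VB.pw (α * N) p -
              VB.pw (α * N) p * ((∑ i : Fin p → Fin N, ∑ j : Fin p → Fin N,
                ∑ J : Fin p → Bool, VB.innerG N p β i j J α' n)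
                  / ((N:ℝ)^p * (N:ℝ)^p * 2^p))) := tsum_mul_left
        _ = (2 * VB.tcoef β n) * (1 - pertOverlap N β α' α (n + 1)) := by
            rw [Summable.tsum_sub (VB.summable_pw _) hYsum, VB.tsum_pw]
            rfl
        _ = 2 * (VB.tcoef β n * (1 - pertOverlap N β α' α (n + 1))) := by ring
    rw [tsum_congr hstep3, tsum_mul_left]
  rw [show (2 * ∑' n : ℕ, Real.tanh β ^ (2 * (n + 1)) / (2 * (n + 1)) *
      (1 - pertOverlap N β α' α (n + 1)))
      = 2 * ∑' n : ℕ, VB.tcoef β n * (1 - pertOverlap N β α' α (n + 1)) from rfl]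
  rw [← hval]
  exact HD

end
end

section
/- In the random Gibbs setting, if ⟨q²_{12}⟩ > 0, then ⟨q²_{1⋯2n}⟩ > 0 for every n ≥ 1. In particular, all even multi-overlap second moments become nonzero at the same point at which ⟨q²_{12}⟩ becomes nonzero. -/
open MeasureTheory

noncomputable section

/-- The Gibbs correlation `Ω(σ_i σ_j)` of the (realized) probability weights `w` on
`{-1,1}^N`. -/
def gibbsCorr (N : ℕ) (w : (Fin N → Bool) → ℝ) (i j : Fin N) : ℝ :=
  ∑ σ : Fin N → Bool, w σ * spin (σ i) * spin (σ j)

/-- In the random Gibbs setting, if `⟨q²_{12}⟩ > 0` then `⟨q²_{1⋯2n}⟩ > 0`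
for every `n ≥ 1`: all even multi-overlap second moments become nonzero at the same point
at which `⟨q²_{12}⟩` does. -/
theorem multioverlap_pos_of_overlap_pos {Λ : Type*} [MeasurableSpace Λ] (μ : Measure Λ)
    [IsProbabilityMeasure μ] (N : ℕ) (hN : 1 ≤ N) (w : Λ → (Fin N → Bool) → ℝ)
    (hmeas : ∀ σ : Fin N → Bool, Measurable fun l : Λ => w l σ)
    (hnonneg : ∀ l : Λ, ∀ σ : Fin N → Bool, 0 ≤ w l σ)
    (hsum : ∀ l : Λ, ∑ σ : Fin N → Bool, w l σ = 1)
    (hpos : 0 < ∫ l, (1 / (N : ℝ) ^ 2) * ∑ i : Fin N, ∑ j : Fin N,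
        gibbsCorr N (w l) i j ^ 2 ∂μ) :
    ∀ n : ℕ, 1 ≤ n →
      0 < ∫ l, (1 / (N : ℝ) ^ 2) * ∑ i : Fin N, ∑ j : Fin N,
        gibbsCorr N (w l) i j ^ (2 * n) ∂μ := by
  intro n hn
  have hN0 : (0:ℝ) < (N:ℝ) := by exact_mod_cast hN
  have hNpos : (0:ℝ) < (N:ℝ)^2 := by positivity
  have hspin : ∀ b : Bool, |spin b| = 1 := by
    intro b; cases b <;> simp [spin]
  have hcb : ∀ l i j, |gibbsCorr N (w l) i j| ≤ 1 := by
    intro l i j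
    calc |gibbsCorr N (w l) i j|
        ≤ ∑ σ : Fin N → Bool, |w l σ * spin (σ i) * spin (σ j)| :=
          Finset.abs_sum_le_sum_abs _ _
      _ = ∑ σ : Fin N → Bool, w l σ := by
          refine Finset.sum_congr rfl fun σ _ => ?_
          rw [abs_mul, abs_mul, hspin, hspin, abs_of_nonneg (hnonneg l σ)]
          ring
      _ = 1 := hsum l
  have hcorrmeas : ∀ i j : Fin N, Measurable fun l => gibbsCorr N (w l) i j := by
    intro i j
    exact Finset.measurable_sum _ fun σ _ => ((hmeas σ).mul measurable_const).mul measurable_const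
  set g : Λ → ℝ := fun l => (1 / (N : ℝ) ^ 2) * ∑ i : Fin N, ∑ j : Fin N,
      gibbsCorr N (w l) i j ^ (2 * n) with hg
  have hgmeas : Measurable g :=
    measurable_const.mul (Finset.measurable_sum _ fun i _ =>
      Finset.measurable_sum _ fun j _ => (hcorrmeas i j).pow_const _)
  have hgnn : ∀ l, 0 ≤ g l := by
    intro l
    apply mul_nonneg (by positivity)
    refine Finset.sum_nonneg fun i _ => Finset.sum_nonneg fun j _ => ?_
    rw [mul_comm 2 n, pow_mul]
    positivity
  have hgbd : ∀ l, ‖g l‖ ≤ (1:ℝ) := by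
    intro l
    rw [Real.norm_eq_abs, abs_of_nonneg (hgnn l)]
    have hs : ∑ i : Fin N, ∑ j : Fin N, gibbsCorr N (w l) i j ^ (2 * n)
        ≤ ∑ _i : Fin N, ∑ _j : Fin N, (1:ℝ) := by
      refine Finset.sum_le_sum fun i _ => Finset.sum_le_sum fun j _ => ?_
      calc gibbsCorr N (w l) i j ^ (2 * n) ≤ |gibbsCorr N (w l) i j ^ (2 * n)| := le_abs_self _
        _ = |gibbsCorr N (w l) i j| ^ (2 * n) := abs_pow _ _
        _ ≤ 1 := pow_le_one₀ (abs_nonneg _) (hcb l i j)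
    have : (1 / (N:ℝ)^2) * ∑ i : Fin N, ∑ j : Fin N, gibbsCorr N (w l) i j ^ (2 * n)
        ≤ (1 / (N:ℝ)^2) * ((N:ℝ)^2) := by
      apply mul_le_mul_of_nonneg_left _ (by positivity)
      simpa [sq] using hs
    simpa [hg, one_div, inv_mul_cancel₀ (ne_of_gt hNpos)] using this
  have hgint : Integrable g μ := by
    refine Integrable.mono' (integrable_const 1) hgmeas.aestronglyMeasurable ?_
    exact ae_of_all _ hgbd
  by_contra h
  push_neg at h
  have hzero : ∫ l, g l ∂μ = 0 :=
    le_antisymm h (integral_nonneg hgnn)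
  have hae : g =ᵐ[μ] 0 :=
    (integral_eq_zero_iff_of_nonneg hgnn hgint).mp hzero
  have hae2 : (fun l => (1 / (N : ℝ) ^ 2) * ∑ i : Fin N, ∑ j : Fin N,
      gibbsCorr N (w l) i j ^ 2) =ᵐ[μ] 0 := by
    filter_upwards [hae] with l hl
    have hsum0 : ∑ i : Fin N, ∑ j : Fin N, gibbsCorr N (w l) i j ^ (2 * n) = 0 := by
      have := hl
      simp only [hg, Pi.zero_apply] at this
      have h1 : (1 / (N:ℝ)^2) ≠ 0 := by positivity
      exact (mul_eq_zero.mp this).resolve_left h1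
    have hterm : ∀ i ∈ Finset.univ, ∀ j ∈ (Finset.univ : Finset (Fin N)),
        gibbsCorr N (w l) i j ^ (2 * n) = 0 := by
      intro i _ j _
      have hinner := (Finset.sum_eq_zero_iff_of_nonneg (fun i _ =>
        Finset.sum_nonneg fun j _ => by rw [mul_comm 2 n, pow_mul]; positivity)).mp hsum0 i
        (Finset.mem_univ i)
      exact (Finset.sum_eq_zero_iff_of_nonneg (fun j _ => by
        rw [mul_comm 2 n, pow_mul]; positivity)).mp hinner j (Finset.mem_univ j)
    have hc0 : ∀ i j : Fin N, gibbsCorr N (w l) i j = 0 := by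
      intro i j
      have := hterm i (Finset.mem_univ i) j (Finset.mem_univ j)
      have h2n : 2 * n ≠ 0 := by omega
      exact pow_eq_zero_iff h2n |>.mp this
    simp [hc0]
  have : ∫ l, (1 / (N : ℝ) ^ 2) * ∑ i : Fin N, ∑ j : Fin N,
      gibbsCorr N (w l) i j ^ 2 ∂μ = 0 := by
    rw [integral_congr_ae hae2]; simp
  linarith

end
end
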